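/- In the GDPR scenario encoded in Åqvist's system E, no arbitrary obligation follows: there exist a preference model M, a world s of M, and a propositional letter q such that M,s satisfies ○(p/⊤), ○(e/¬p), ○(¬e/p), and ¬p, but M,s does not satisfy ○(q/⊤) (where p, e, q are distinct propositional letters and ⊤ is a propositional tautology). -/

import Mathlib

/-!
A two-world countermodel: the world `true`, where `p` holds, is strictly better than the actual
world `false`, where `p` fails and `e` holds. The `p`-world is the unique optimal world overall,
so `○(p/⊤)` holds and `○(q/⊤)` fails for a letter `q` false there; `‖p‖` and `‖¬p‖` are single
worlds, which settles the two conditional obligations.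
-/

/-- Formulas of Åqvist's dyadic deontic logic **E**:
`φ ::= p | ¬φ | φ∧φ | □φ | ○(φ/φ)`.
`EForm.ob ψ φ` denotes `○(ψ/φ)` ("ψ is obligatory, given φ"). -/
inductive EForm : Type where
  | atom : ℕ → EForm
  | neg  : EForm → EForm
  | conj : EForm → EForm → EForm
  | box  : EForm → EForm
  | ob   : EForm → EForm → EForm
deriving DecidableEq

/-- Material implication, defined classically. -/
def EForm.impl (φ ψ : EForm) : EForm := .neg (.conj φ (.neg ψ))

/-- Biconditional. -/
def EForm.iff' (φ ψ : EForm) : EForm := .conj (φ.impl ψ) (ψ.impl φ)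

/-- A preference model `M = (W, ≽, V)`: a nonempty set of worlds, a betterness
relation, and a valuation. -/
structure PrefModel where
  W : Type
  ne : Nonempty W
  R : W → W → Prop
  V : ℕ → W → Prop

/-- Satisfaction `M,s ⊨ φ`. In particular
`M,s ⊨ ○(ψ/φ)` iff `opt_≽(‖φ‖) ⊆ ‖ψ‖`, where
`opt_≽(‖φ‖) = {w ∈ ‖φ‖ : ∀ y, (M,y ⊨ φ) → w ≽ y}`. -/
def PrefModel.sat (M : PrefModel) : M.W → EForm → Prop
  | s, .atom n   => M.V n s
  | s, .neg φ    => ¬ PrefModel.sat M s φ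
  | s, .conj φ ψ => PrefModel.sat M s φ ∧ PrefModel.sat M s ψ
  | _, .box φ    => ∀ t, PrefModel.sat M t φ
  | _, .ob ψ φ   => ∀ w, (PrefModel.sat M w φ ∧ ∀ y, PrefModel.sat M y φ → M.R w y) →
                     PrefModel.sat M w ψ

/-- Validity in the class of all preference models. -/
def EValid (φ : EForm) : Prop := ∀ (M : PrefModel) (s : M.W), M.sat s φ

/-- A propositional tautology `⊤` of the language of E. -/
def Etop : EForm := (EForm.atom 0).impl (EForm.atom 0)

namespace PrefModel

variable (M : PrefModel)

@[simp]
theorem sat_Etop (w : M.W) : M.sat w Etop := by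
  simp [sat, Etop, EForm.impl]

theorem sat_ob_of_dominating {ψ φ : EForm} (t : M.W) (ht : M.sat t φ)
    (h : ∀ w, M.sat w φ → M.R w t → M.sat w ψ) (s : M.W) : M.sat s (.ob ψ φ) :=
  fun w ⟨hw, hopt⟩ => h w hw (hopt t ht)

theorem not_sat_ob_of_optimal {ψ φ : EForm} (w : M.W) (hw : M.sat w φ)
    (hopt : ∀ y, M.sat y φ → M.R w y) (hψ : ¬ M.sat w ψ) (s : M.W) : ¬ M.sat s (.ob ψ φ) :=
  fun hob => hψ (hob w ⟨hw, hopt⟩)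

end PrefModel

abbrev gdprModel : PrefModel where
  W := Bool
  ne := ⟨true⟩
  R := fun a b => b ≤ a
  V := fun n w => (n = 0 ∧ w = true) ∨ (n = 1 ∧ w = false)

/-- **No explosion in the system-E encoding of the GDPR scenario**: there exist
a preference model, a world and a propositional letter `q` such that `○(p/⊤)`,
`○(e/¬p)`, `○(¬e/p)` and `¬p` all hold there, while `○(q/⊤)` does not
(with `p = atom 0`, `e = atom 1`, `q = atom 2` distinct letters). -/
theorem GDPR_E_no_explosion :
    ∃ (M : PrefModel) (s : M.W),
      M.sat s (EForm.ob (EForm.atom 0) Etop) ∧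
      M.sat s (EForm.ob (EForm.atom 1) (EForm.neg (EForm.atom 0))) ∧
      M.sat s (EForm.ob (EForm.neg (EForm.atom 1)) (EForm.atom 0)) ∧
      M.sat s (EForm.neg (EForm.atom 0)) ∧
      ¬ M.sat s (EForm.ob (EForm.atom 2) Etop) := by
  refine ⟨gdprModel, false, ?_, ?_, ?_, ?_, ?_⟩
  · exact gdprModel.sat_ob_of_dominating true (by simp) (fun w _ hw => by
      simpa [PrefModel.sat] using top_le_iff.mp hw) _
  · exact gdprModel.sat_ob_of_dominating false (by simp [PrefModel.sat]) (fun w hw _ => by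
      simp_all [PrefModel.sat]) _
  · exact gdprModel.sat_ob_of_dominating true (by simp [PrefModel.sat]) (fun w hw _ => by
      simp_all [PrefModel.sat]) _
  · simp [PrefModel.sat]
  · exact gdprModel.not_sat_ob_of_optimal true (by simp) (fun _ _ => le_top)
      (by simp [PrefModel.sat]) _
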